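/- arXiv:math/0508217 — 6 statements merged into one kernel-verified Lean document; each statement's English description precedes it below -/
import Mathlib

section
/- Let V be a finite-dimensional real inner product space, F : V → ℝ^N a linear map, and Ω : V → V an invertible linear map satisfying Ω + Ωᵀ = Fᵀ ∘ F (i.e., ⟨Ω v, w⟩ + ⟨v, Ω w⟩ = ⟨F v, F w⟩ for all v, w ∈ V). Then the linear map P = id - F ∘ Ω⁻¹ ∘ Fᵀ : ℝ^N → ℝ^N is an isometry, i.e., Pᵀ ∘ P = id. -/
/-- If `Ω + Ωᵀ = Fᵀ ∘ F` with `Ω` invertible, then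
`P = id - F ∘ Ω⁻¹ ∘ Fᵀ` satisfies `Pᵀ ∘ P = id`. -/
theorem vectorial_ribaucour_P_isometry
    {V : Type*} [NormedAddCommGroup V] [InnerProductSpace ℝ V]
    [FiniteDimensional ℝ V] {N : ℕ}
    (F : V →ₗ[ℝ] EuclideanSpace ℝ (Fin N)) (Ω Ωinv : V →ₗ[ℝ] V)
    (h1 : Ω ∘ₗ Ωinv = LinearMap.id) (h2 : Ωinv ∘ₗ Ω = LinearMap.id)
    (hΩ : Ω + LinearMap.adjoint Ω = LinearMap.adjoint F ∘ₗ F) :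
    LinearMap.adjoint (LinearMap.id - F ∘ₗ Ωinv ∘ₗ LinearMap.adjoint F) ∘ₗ
      (LinearMap.id - F ∘ₗ Ωinv ∘ₗ LinearMap.adjoint F) = LinearMap.id := by
  have hidV : LinearMap.adjoint (LinearMap.id : V →ₗ[ℝ] V) = LinearMap.id := by
    rw [← Module.End.one_eq_id, ← LinearMap.star_eq_adjoint, star_one]
  have hidE : LinearMap.adjoint
      (LinearMap.id : EuclideanSpace ℝ (Fin N) →ₗ[ℝ] EuclideanSpace ℝ (Fin N))
      = LinearMap.id := by
    rw [← Module.End.one_eq_id, ← LinearMap.star_eq_adjoint, star_one]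
  have hA : LinearMap.adjoint (LinearMap.id - F ∘ₗ Ωinv ∘ₗ LinearMap.adjoint F)
      = LinearMap.id - F ∘ₗ LinearMap.adjoint Ωinv ∘ₗ LinearMap.adjoint F := by
    simp [map_sub, LinearMap.adjoint_comp, LinearMap.adjoint_adjoint, LinearMap.comp_assoc, hidE]
  have key : LinearMap.adjoint Ωinv ∘ₗ (LinearMap.adjoint F ∘ₗ F) ∘ₗ Ωinv
      = LinearMap.adjoint Ωinv + Ωinv := by
    rw [← hΩ]
    have h3 : LinearMap.adjoint Ωinv ∘ₗ LinearMap.adjoint Ω = LinearMap.id := by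
      rw [← LinearMap.adjoint_comp, h1, hidV]
    calc LinearMap.adjoint Ωinv ∘ₗ (Ω + LinearMap.adjoint Ω) ∘ₗ Ωinv
        = (LinearMap.adjoint Ωinv ∘ₗ Ω) ∘ₗ Ωinv
          + (LinearMap.adjoint Ωinv ∘ₗ LinearMap.adjoint Ω) ∘ₗ Ωinv := by
          rw [LinearMap.add_comp, LinearMap.comp_add]
          simp [LinearMap.comp_assoc]
      _ = LinearMap.adjoint Ωinv ∘ₗ (Ω ∘ₗ Ωinv) + LinearMap.id ∘ₗ Ωinv := by
          rw [h3, LinearMap.comp_assoc]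
      _ = LinearMap.adjoint Ωinv + Ωinv := by rw [h1]; simp
  rw [hA, LinearMap.sub_comp, LinearMap.comp_sub, LinearMap.comp_sub]
  have expand : (F ∘ₗ LinearMap.adjoint Ωinv ∘ₗ LinearMap.adjoint F) ∘ₗ
      (F ∘ₗ Ωinv ∘ₗ LinearMap.adjoint F)
      = F ∘ₗ LinearMap.adjoint Ωinv ∘ₗ LinearMap.adjoint F
        + F ∘ₗ Ωinv ∘ₗ LinearMap.adjoint F := by
    have : (F ∘ₗ LinearMap.adjoint Ωinv ∘ₗ LinearMap.adjoint F) ∘ₗ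
        (F ∘ₗ Ωinv ∘ₗ LinearMap.adjoint F)
        = F ∘ₗ (LinearMap.adjoint Ωinv ∘ₗ (LinearMap.adjoint F ∘ₗ F) ∘ₗ Ωinv)
            ∘ₗ LinearMap.adjoint F := by
      simp only [LinearMap.comp_assoc]
    rw [this, key, LinearMap.add_comp, LinearMap.comp_add]
  rw [expand]
  simp only [LinearMap.id_comp, LinearMap.comp_id]
  abel
end

section
/- Let F₁ : V₁ → ℝ^N, F₂ : V₂ → ℝ^N be linear, Ω₁₁ : V₁ → V₁ invertible with Ω₁₁ + Ω₁₁ᵀ = F₁ᵀ F₁, Ω₂₂ : V₂ → V₂ with Ω₂₂ + Ω₂₂ᵀ = F₂ᵀ F₂, and Ω₁₂ : V₂ → V₁, Ω₂₁ : V₁ → V₂ with F₁ᵀ F₂ = Ω₁₂ + Ω₂₁ᵀ. Define F̄₂ = F₂ - F₁ Ω₁₁⁻¹ Ω₁₂ and Ω̄₂₂ = Ω₂₂ - Ω₂₁ Ω₁₁⁻¹ Ω₁₂. Then F̄₂ᵀ F̄₂ = Ω̄₂₂ + Ω̄₂₂ᵀ. -/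
/-- with `F̄₂ = F₂ - F₁ Ω₁₁⁻¹ Ω₁₂` and `Ω̄₂₂ = Ω₂₂ - Ω₂₁ Ω₁₁⁻¹ Ω₁₂`,
one has `F̄₂ᵀ F̄₂ = Ω̄₂₂ + Ω̄₂₂ᵀ`. -/
theorem ribaucour_Fbar_Omegabar
    {V₁ V₂ : Type*} [NormedAddCommGroup V₁] [InnerProductSpace ℝ V₁]
    [FiniteDimensional ℝ V₁] [NormedAddCommGroup V₂] [InnerProductSpace ℝ V₂]
    [FiniteDimensional ℝ V₂] {N : ℕ}
    (F₁ : V₁ →ₗ[ℝ] EuclideanSpace ℝ (Fin N)) (F₂ : V₂ →ₗ[ℝ] EuclideanSpace ℝ (Fin N))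
    (Ω₁₂ : V₂ →ₗ[ℝ] V₁) (Ω₂₁ : V₁ →ₗ[ℝ] V₂) (Ω₂₂ : V₂ →ₗ[ℝ] V₂)
    (Ω₁₁ Ωinv : V₁ →ₗ[ℝ] V₁)
    (h1 : Ω₁₁ ∘ₗ Ωinv = LinearMap.id) (h2 : Ωinv ∘ₗ Ω₁₁ = LinearMap.id)
    (hΩ11 : Ω₁₁ + LinearMap.adjoint Ω₁₁ = LinearMap.adjoint F₁ ∘ₗ F₁)
    (hΩ22 : Ω₂₂ + LinearMap.adjoint Ω₂₂ = LinearMap.adjoint F₂ ∘ₗ F₂)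
    (hmix : LinearMap.adjoint F₁ ∘ₗ F₂ = Ω₁₂ + LinearMap.adjoint Ω₂₁) :
    LinearMap.adjoint (F₂ - F₁ ∘ₗ Ωinv ∘ₗ Ω₁₂) ∘ₗ (F₂ - F₁ ∘ₗ Ωinv ∘ₗ Ω₁₂) =
      (Ω₂₂ - Ω₂₁ ∘ₗ Ωinv ∘ₗ Ω₁₂) + LinearMap.adjoint (Ω₂₂ - Ω₂₁ ∘ₗ Ωinv ∘ₗ Ω₁₂) := by

  have aid : LinearMap.adjoint (LinearMap.id : V₁ →ₗ[ℝ] V₁) = LinearMap.id := by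
    rw [← Module.End.one_eq_id, ← LinearMap.star_eq_adjoint, star_one]
  have h1' : LinearMap.adjoint Ωinv ∘ₗ LinearMap.adjoint Ω₁₁ = LinearMap.id := by
    simpa [LinearMap.adjoint_comp, aid] using congrArg LinearMap.adjoint h1
  have h2' : LinearMap.adjoint Ω₁₁ ∘ₗ LinearMap.adjoint Ωinv = LinearMap.id := by
    simpa [LinearMap.adjoint_comp, aid] using congrArg LinearMap.adjoint h2
  have e1 : LinearMap.adjoint F₂ ∘ₗ F₁ = LinearMap.adjoint Ω₁₂ + Ω₂₁ := by
    simpa [LinearMap.adjoint_comp, LinearMap.adjoint_adjoint] using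
      congrArg LinearMap.adjoint hmix
  have expand :
      LinearMap.adjoint (F₂ - F₁ ∘ₗ Ωinv ∘ₗ Ω₁₂) ∘ₗ (F₂ - F₁ ∘ₗ Ωinv ∘ₗ Ω₁₂)
      = (LinearMap.adjoint F₂ ∘ₗ F₂)
        - (LinearMap.adjoint F₂ ∘ₗ F₁) ∘ₗ (Ωinv ∘ₗ Ω₁₂)
        - (LinearMap.adjoint Ω₁₂ ∘ₗ LinearMap.adjoint Ωinv) ∘ₗ (LinearMap.adjoint F₁ ∘ₗ F₂)
        + (LinearMap.adjoint Ω₁₂ ∘ₗ LinearMap.adjoint Ωinv) ∘ₗ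
            ((LinearMap.adjoint F₁ ∘ₗ F₁) ∘ₗ (Ωinv ∘ₗ Ω₁₂)) := by
    simp only [map_sub, LinearMap.adjoint_comp, LinearMap.sub_comp, LinearMap.comp_sub,
      LinearMap.comp_assoc]
    abel
  rw [expand, e1, hmix, ← hΩ22, ← hΩ11]
  have r1 : Ω₁₁ ∘ₗ (Ωinv ∘ₗ Ω₁₂) = Ω₁₂ := by
    rw [← LinearMap.comp_assoc, h1, LinearMap.id_comp]
  have r2 : LinearMap.adjoint Ωinv ∘ₗ (LinearMap.adjoint Ω₁₁ ∘ₗ (Ωinv ∘ₗ Ω₁₂))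
      = Ωinv ∘ₗ Ω₁₂ := by
    rw [← LinearMap.comp_assoc, h1', LinearMap.id_comp]
  simp only [map_sub, LinearMap.adjoint_comp, LinearMap.adjoint_adjoint, LinearMap.add_comp,
    LinearMap.comp_add, LinearMap.sub_comp, LinearMap.comp_sub, LinearMap.comp_assoc, r1, r2]
  abel
end

section
/- Let U ⊂ ℝ^n be open and let φ₁, ..., φ_m be smooth real functions on U such that the Hessian matrices pairwise commute: [Hess φ_i, Hess φ_j] = 0 for all i, j. Define the one-form ρ on U with values in m×m matrices by ρ(X)_{ij} = ⟨∇φ_i, (Hess φ_j) X⟩. Then ρ is closed. -/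
open RealInnerProductSpace

section Helpers

variable {n : ℕ}

local notation "E" => EuclideanSpace ℝ (Fin n)

private lemma inner_gradient_eq' (f : E → ℝ) (y w : E) :
    ⟪gradient f y, w⟫ = fderiv ℝ f y w :=
  InnerProductSpace.toDual_symm_apply

private lemma gradient_contDiffAt' {f : E → ℝ} {x : E} {k : ℕ}
    (hf : ContDiffAt ℝ (↑(k + 1)) f x) :
    ContDiffAt ℝ (k : ℕ) (gradient f) x := by
  have h1 : ContDiffAt ℝ (k : ℕ) (fderiv ℝ f) x := by
    apply hf.fderiv_right
    norm_cast
  have heq : gradient f = fun y =>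
      ((InnerProductSpace.toDual ℝ E).symm.toContinuousLinearEquiv :
        StrongDual ℝ E ≃L[ℝ] E) (fderiv ℝ f y) := rfl
  rw [heq]
  exact ((InnerProductSpace.toDual ℝ E).symm.toContinuousLinearEquiv :
    StrongDual ℝ E ≃L[ℝ] E).toContinuousLinearMap.contDiff.contDiffAt.comp x h1

private lemma hess_apply' {f : E → ℝ} {x : E}
    (hf : ContDiffAt ℝ (⊤ : ℕ∞) f x) (v w : E) :
    ⟪fderiv ℝ (gradient f) x v, w⟫ = fderiv ℝ (fderiv ℝ f) x v w := by
  have hg : DifferentiableAt ℝ (gradient f) x := by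
    have := gradient_contDiffAt' (f := f) (x := x) (k := 1) (hf.of_le (WithTop.coe_le_coe.mpr le_top))
    exact this.differentiableAt (by norm_cast)
  have hd : DifferentiableAt ℝ (fderiv ℝ f) x := by
    have : ContDiffAt ℝ (1 : ℕ) (fderiv ℝ f) x := by
      apply (hf.of_le ((WithTop.coe_le_coe.mpr le_top) : ((2:ℕ) : WithTop ℕ∞) ≤ ((⊤ : ℕ∞) : WithTop ℕ∞))).fderiv_right
      norm_cast
    exact this.differentiableAt (by norm_cast)
  -- the two functions `y ↦ ⟪gradient f y, w⟫` and `y ↦ fderiv ℝ f y w` coincide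
  have hfun : (fun y => ⟪gradient f y, w⟫) = fun y => fderiv ℝ f y w := by
    funext y; exact inner_gradient_eq' f y w
  -- derivative of the first
  have h1 : HasFDerivAt (fun y => ⟪gradient f y, w⟫)
      ((innerSL ℝ w).comp (fderiv ℝ (gradient f) x)) x := by
    have hrw : (fun y => ⟪gradient f y, w⟫) = fun y => (innerSL ℝ w) (gradient f y) := by
      funext y; exact real_inner_comm w (gradient f y)
    rw [hrw]
    exact (innerSL ℝ w).hasFDerivAt.comp x hg.hasFDerivAt
  -- derivative of the second
  have h2 : HasFDerivAt (fun y => fderiv ℝ f y w)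
      ((ContinuousLinearMap.apply ℝ ℝ w).comp (fderiv ℝ (fderiv ℝ f) x)) x :=
    (ContinuousLinearMap.apply ℝ ℝ w).hasFDerivAt.comp x hd.hasFDerivAt
  rw [hfun] at h1
  have huniq := h1.unique h2
  have happ := congrArg (fun (T : E →L[ℝ] ℝ) => T v) huniq
  simp only [ContinuousLinearMap.comp_apply, innerSL_apply_apply,
    ContinuousLinearMap.apply_apply] at happ
  rw [← happ]
  exact real_inner_comm w _

private lemma hess_selfAdjoint' {f : E → ℝ} {x : E}
    (hf : ContDiffAt ℝ (⊤ : ℕ∞) f x) (v w : E) :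
    ⟪fderiv ℝ (gradient f) x v, w⟫ = ⟪v, fderiv ℝ (gradient f) x w⟫ := by
  have hsym : IsSymmSndFDerivAt ℝ f x := hf.isSymmSndFDerivAt (by simp only [minSmoothness_of_isRCLikeNormedField]; exact WithTop.coe_le_coe.mpr le_top)
  rw [hess_apply' hf v w, real_inner_comm, hess_apply' hf w v]
  exact (hsym w v).symm

end Helpers

/-- if the Hessians of `φ₁, …, φ_m` pairwise commute on an open set
`U ⊆ ℝⁿ`, then the matrix-valued one-form `ρ(X)_{ij} = ⟨∇φ_i, (Hess φ_j) X⟩` is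
closed. Here `Hess φ_j` is the derivative of the gradient field `∇φ_j`, and
closedness of `ρ` is the symmetry `∂_X ρ(Y)_{ij} = ∂_Y ρ(X)_{ij}` for constant
directions `X, Y`. -/
theorem rho_one_form_closed {n m : ℕ}
    (U : Set (EuclideanSpace ℝ (Fin n))) (hU : IsOpen U)
    (φ : Fin m → EuclideanSpace ℝ (Fin n) → ℝ)
    (hφ : ∀ i, ContDiffOn ℝ (⊤ : ℕ∞) (φ i) U)
    (hcomm : ∀ i j, ∀ x ∈ U,
      (fderiv ℝ (gradient (φ i)) x).comp (fderiv ℝ (gradient (φ j)) x) =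
        (fderiv ℝ (gradient (φ j)) x).comp (fderiv ℝ (gradient (φ i)) x)) :
    ∀ i j, ∀ x ∈ U, ∀ X Y,
      fderiv ℝ (fun y => ⟪gradient (φ i) y, fderiv ℝ (gradient (φ j)) y Y⟫) x X =
        fderiv ℝ (fun y => ⟪gradient (φ i) y, fderiv ℝ (gradient (φ j)) y X⟫) x Y := by
  intro i j x hx X Y
  have hφi : ContDiffAt ℝ (⊤ : ℕ∞) (φ i) x := (hφ i).contDiffAt (hU.mem_nhds hx)
  have hφj : ContDiffAt ℝ (⊤ : ℕ∞) (φ j) x := (hφ j).contDiffAt (hU.mem_nhds hx)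
  set gi := gradient (φ i) with hgi_def
  set gj := gradient (φ j) with hgj_def
  -- differentiability facts
  have hgi : HasFDerivAt gi (fderiv ℝ gi x) x := by
    have := gradient_contDiffAt' (f := φ i) (x := x) (k := 1) (hφi.of_le (WithTop.coe_le_coe.mpr le_top))
    exact (this.differentiableAt (by norm_cast)).hasFDerivAt
  have hgj2 : ContDiffAt ℝ ((2 : ℕ) : WithTop ℕ∞) gj x :=
    gradient_contDiffAt' (f := φ j) (x := x) (k := 2) (hφj.of_le (WithTop.coe_le_coe.mpr le_top))
  have hHj : HasFDerivAt (fun y => fderiv ℝ gj y) (fderiv ℝ (fderiv ℝ gj) x) x := by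
    have h1 : ContDiffAt ℝ (1 : ℕ) (fderiv ℝ gj) x := by
      apply hgj2.fderiv_right; norm_cast
    exact (h1.differentiableAt (by norm_cast)).hasFDerivAt
  -- derivative formula for the map `y ↦ ⟪gi y, fderiv ℝ gj y Z⟫`
  have key : ∀ Z W : EuclideanSpace ℝ (Fin n),
      fderiv ℝ (fun y => ⟪gi y, fderiv ℝ gj y Z⟫) x W =
        ⟪gi x, fderiv ℝ (fderiv ℝ gj) x W Z⟫ + ⟪fderiv ℝ gi x W, fderiv ℝ gj x Z⟫ := by
    intro Z W
    have hz : HasFDerivAt (fun y => fderiv ℝ gj y Z)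
        ((ContinuousLinearMap.apply ℝ (EuclideanSpace ℝ (Fin n)) Z).comp
          (fderiv ℝ (fderiv ℝ gj) x)) x :=
      (ContinuousLinearMap.apply ℝ (EuclideanSpace ℝ (Fin n)) Z).hasFDerivAt.comp x hHj
    have h := hgi.inner ℝ hz
    rw [h.fderiv]
    simp only [ContinuousLinearMap.comp_apply, ContinuousLinearMap.prod_apply,
      fderivInnerCLM_apply, ContinuousLinearMap.apply_apply]
  rw [key Y X, key X Y]
  -- symmetry of the second fderiv of gj
  have hsymj : IsSymmSndFDerivAt ℝ gj x := hgj2.isSymmSndFDerivAt (by simp [minSmoothness_of_isRCLikeNormedField])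
  have t1 : fderiv ℝ (fderiv ℝ gj) x X Y = fderiv ℝ (fderiv ℝ gj) x Y X := hsymj X Y
  -- self-adjointness and commutation
  have hsai := hess_selfAdjoint' hφi
  have hsaj := hess_selfAdjoint' hφj
  have hc := hcomm i j x hx
  have t2 : ⟪fderiv ℝ gi x X, fderiv ℝ gj x Y⟫ = ⟪fderiv ℝ gi x Y, fderiv ℝ gj x X⟫ := by
    calc ⟪fderiv ℝ gi x X, fderiv ℝ gj x Y⟫
        = ⟪X, fderiv ℝ gi x (fderiv ℝ gj x Y)⟫ := hsai X _
      _ = ⟪X, ((fderiv ℝ gi x).comp (fderiv ℝ gj x)) Y⟫ := rfl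
      _ = ⟪X, ((fderiv ℝ gj x).comp (fderiv ℝ gi x)) Y⟫ := by rw [hc]
      _ = ⟪X, fderiv ℝ gj x (fderiv ℝ gi x Y)⟫ := rfl
      _ = ⟪fderiv ℝ gj x X, fderiv ℝ gi x Y⟫ := (hsaj X _).symm
      _ = ⟪fderiv ℝ gi x Y, fderiv ℝ gj x X⟫ := real_inner_comm _ _
  rw [t1, t2]
end

section
/- Let G be an n×m real matrix and Ω an invertible m×m real matrix with Ω + Ωᵀ = Gᵀ G + I. Let F = [G; I_m] be the (n+m)×m matrix obtained by stacking G on top of I_m, and let P = I_{n+m} - F Ω⁻¹ Fᵀ. Then P is orthogonal: Pᵀ P = I_{n+m}. -/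
open Matrix

/-- for an `n × m` matrix `G` and invertible `Ω` with
`Ω + Ωᵀ = Gᵀ G + I`, the matrix `P = I - F Ω⁻¹ Fᵀ`, with `F = [G; I_m]`,
is orthogonal: `Pᵀ P = I`. -/
theorem P_block_orthogonal {n m : ℕ}
    (G : Matrix (Fin n) (Fin m) ℝ) (Ω : Matrix (Fin m) (Fin m) ℝ)
    (hΩunit : IsUnit Ω) (hΩ : Ω + Ωᵀ = Gᵀ * G + 1) :
    ((1 : Matrix (Fin n ⊕ Fin m) (Fin n ⊕ Fin m) ℝ) -
        Matrix.fromRows G 1 * Ω⁻¹ * (Matrix.fromRows G 1)ᵀ)ᵀ *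
      ((1 : Matrix (Fin n ⊕ Fin m) (Fin n ⊕ Fin m) ℝ) -
        Matrix.fromRows G 1 * Ω⁻¹ * (Matrix.fromRows G 1)ᵀ) = 1 := by
  set F : Matrix (Fin n ⊕ Fin m) (Fin m) ℝ := Matrix.fromRows G 1 with hF
  have hdet : IsUnit Ω.det := (isUnit_iff_isUnit_det Ω).mp hΩunit
  have hFtF : Fᵀ * F = Ω + Ωᵀ := by
    rw [hF, transpose_fromRows, fromCols_mul_fromRows, hΩ]
    simp
  have hinv : Ω * Ω⁻¹ = 1 := mul_nonsing_inv Ω hdet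
  have hinvT : (Ω⁻¹)ᵀ * Ωᵀ = 1 := by
    rw [← transpose_mul, hinv, transpose_one]
  have inner : (Ω⁻¹)ᵀ * (Ω + Ωᵀ) * Ω⁻¹ = (Ω⁻¹)ᵀ + Ω⁻¹ := by
    rw [Matrix.mul_add, Matrix.add_mul, hinvT,
      Matrix.mul_assoc (Ω⁻¹)ᵀ Ω Ω⁻¹, hinv, Matrix.mul_one, Matrix.one_mul]
  have key : (F * (Ω⁻¹)ᵀ * Fᵀ) * (F * Ω⁻¹ * Fᵀ)
      = F * (Ω⁻¹)ᵀ * Fᵀ + F * Ω⁻¹ * Fᵀ := by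
    have h1 : (F * (Ω⁻¹)ᵀ * Fᵀ) * (F * Ω⁻¹ * Fᵀ)
        = F * ((Ω⁻¹)ᵀ * (Fᵀ * F) * Ω⁻¹) * Fᵀ := by
      simp only [Matrix.mul_assoc]
    rw [h1, hFtF, inner, Matrix.mul_add, Matrix.add_mul]
  rw [transpose_sub, transpose_one, transpose_mul, transpose_mul,
    transpose_transpose, Matrix.sub_mul, Matrix.mul_sub, Matrix.mul_sub,
    Matrix.one_mul, Matrix.one_mul, Matrix.mul_one]
  simp only [Matrix.mul_assoc] at key ⊢
  rw [key]
  abel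
end

section
/- Let X₁, ..., X_n : U → ℝ^n be smooth on a connected open set U ⊂ ℝ^n satisfying ∂X_i/∂u_j = β_{ij} X_j for i ≠ j and ∂X_i/∂u_i = -Σ_{k≠i} β_{ki} X_k, for smooth functions β_{ij}. If the matrix X = (X₁, ..., X_n) satisfies Xᵀ X = I at one point of U, then Xᵀ X = I on all of U. -/
open RealInnerProductSpace

/-- if the frame `X₁, …, X_n : U → ℝⁿ` satisfies
`∂X_i/∂u_j = β_{ij} X_j` for `i ≠ j` and `∂X_i/∂u_i = -∑_{k≠i} β_{ki} X_k` on a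
connected open `U`, and `XᵀX = I` (orthonormality of the columns) holds at one
point of `U`, then it holds on all of `U`. -/
theorem frame_orthonormality_propagates {n : ℕ}
    (U : Set (EuclideanSpace ℝ (Fin n))) (hU : IsOpen U) (hUconn : IsConnected U)
    (X : Fin n → EuclideanSpace ℝ (Fin n) → EuclideanSpace ℝ (Fin n))
    (hX : ∀ i, ContDiffOn ℝ (⊤ : ℕ∞) (X i) U)
    (β : Fin n → Fin n → EuclideanSpace ℝ (Fin n) → ℝ)
    (hβ : ∀ i j, ContDiffOn ℝ (⊤ : ℕ∞) (β i j) U)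
    (hoff : ∀ i j, i ≠ j → ∀ x ∈ U,
      fderiv ℝ (X i) x (EuclideanSpace.single j (1:ℝ)) = β i j x • X j x)
    (hdiag : ∀ i, ∀ x ∈ U,
      fderiv ℝ (X i) x (EuclideanSpace.single i (1:ℝ)) =
        -∑ k ∈ Finset.univ.erase i, β k i x • X k x)
    (x₀ : EuclideanSpace ℝ (Fin n)) (hx₀ : x₀ ∈ U)
    (horth : ∀ i j, ⟪X i x₀, X j x₀⟫ = if i = j then (1:ℝ) else 0) :
    ∀ x ∈ U, ∀ i j, ⟪X i x, X j x⟫ = if i = j then (1:ℝ) else 0 := by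
  classical
  set h : EuclideanSpace ℝ (Fin n) → (Fin n → Fin n → ℝ) :=
    fun x i j => ⟪X i x, X j x⟫ - (if i = j then (1:ℝ) else 0) with hh
  suffices hS : ∀ x ∈ U, h x = 0 by
    intro x hx i j
    have := congrFun (congrFun (hS x hx) i) j
    simpa [hh, sub_eq_zero] using this
  have hXd : ∀ i, ∀ x ∈ U, DifferentiableAt ℝ (X i) x := fun i x hx =>
    ((hX i).differentiableOn (by simp)).differentiableAt (hU.mem_nhds hx)
  set D : Fin n → Fin n → Fin n → EuclideanSpace ℝ (Fin n) → ℝ := fun i j k x =>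
    (if k = i then -∑ m ∈ Finset.univ.erase i, β m i x * h x m j else β i k x * h x k j) +
    (if k = j then -∑ m ∈ Finset.univ.erase j, β m j x * h x i m else β j k x * h x i k)
    with hD
  have hsum1 : ∀ x (i j : Fin n), ∑ m ∈ Finset.univ.erase i, β m i x * h x m j
      = (∑ m ∈ Finset.univ.erase i, β m i x * ⟪X m x, X j x⟫)
        - (if j = i then 0 else β j i x) := by
    intro x i j
    have step : ∀ m : Fin n, β m i x * h x m j
        = β m i x * ⟪X m x, X j x⟫ - (if m = j then β m i x else 0) := by
      intro m
      have he : h x m j = ⟪X m x, X j x⟫ - (if m = j then 1 else 0) := rfl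
      rw [he, mul_sub, mul_ite, mul_one, mul_zero]
    rw [Finset.sum_congr rfl (fun m _ => step m), Finset.sum_sub_distrib,
      Finset.sum_ite_eq' (Finset.univ.erase i) j (fun m => β m i x)]
    by_cases hji : j = i <;> simp [hji, Finset.mem_erase]
  have hsum2 : ∀ x (i j : Fin n), ∑ m ∈ Finset.univ.erase j, β m j x * h x i m
      = (∑ m ∈ Finset.univ.erase j, β m j x * ⟪X i x, X m x⟫)
        - (if i = j then 0 else β i j x) := by
    intro x i j
    have step : ∀ m : Fin n, β m j x * h x i m
        = β m j x * ⟪X i x, X m x⟫ - (if i = m then β m j x else 0) := by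
      intro m
      have he : h x i m = ⟪X i x, X m x⟫ - (if i = m then 1 else 0) := rfl
      rw [he, mul_sub, mul_ite, mul_one, mul_zero]
    rw [Finset.sum_congr rfl (fun m _ => step m), Finset.sum_sub_distrib,
      Finset.sum_ite_eq (Finset.univ.erase j) i (fun m => β m j x)]
    by_cases hij : i = j <;> simp [hij, Finset.mem_erase]
  have hsum1' : ∀ x (i j : Fin n),
      ∑ m ∈ Finset.univ.erase i, β m i x * ((⟪X m x, X j x⟫:ℝ) - if m = j then 1 else 0)
      = (∑ m ∈ Finset.univ.erase i, β m i x * ⟪X m x, X j x⟫)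
        - (if j = i then 0 else β j i x) := by
    intro x i j
    have := hsum1 x i j
    simpa only [hh] using this
  have hsum2' : ∀ x (i j : Fin n),
      ∑ m ∈ Finset.univ.erase j, β m j x * ((⟪X i x, X m x⟫:ℝ) - if i = m then 1 else 0)
      = (∑ m ∈ Finset.univ.erase j, β m j x * ⟪X i x, X m x⟫)
        - (if i = j then 0 else β i j x) := by
    intro x i j
    have := hsum2 x i j
    simpa only [hh] using this
  have key : ∀ x ∈ U, ∀ i j k : Fin n,
      ⟪X i x, fderiv ℝ (X j) x (EuclideanSpace.single k 1)⟫
        + ⟪fderiv ℝ (X i) x (EuclideanSpace.single k 1), X j x⟫ = D i j k x := by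
    intro x hx i j k
    by_cases hki : k = i <;> by_cases hkj : k = j
    · -- k = i = j
      subst hki; subst hkj
      rw [hdiag k x hx]
      simp only [hD, hh, inner_neg_left, inner_neg_right, inner_sum, sum_inner,
        real_inner_smul_left, real_inner_smul_right]
      rw [hsum1' x k k, hsum2' x k k]
      simp only [eq_self_iff_true, if_true]
      ring
    · -- k = i ≠ j
      subst hki
      have hjk : j ≠ k := fun e => hkj e.symm
      rw [hdiag k x hx, hoff j k hjk x hx]
      simp only [hD, hh, inner_neg_left, inner_neg_right, inner_sum, sum_inner,
        real_inner_smul_left, real_inner_smul_right]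
      rw [hsum1' x k j]
      simp only [eq_self_iff_true, if_true, hkj, hjk, if_false]
      ring
    · -- k = j ≠ i
      subst hkj
      have hik : i ≠ k := fun e => hki e.symm
      rw [hdiag k x hx, hoff i k hik x hx]
      simp only [hD, hh, inner_neg_left, inner_neg_right, inner_sum, sum_inner,
        real_inner_smul_left, real_inner_smul_right]
      rw [hsum2' x i k]
      simp only [eq_self_iff_true, if_true, hki, hik, if_false]
      ring
    · -- k ≠ i, k ≠ j
      have hik : i ≠ k := fun e => hki e.symm
      have hjk : j ≠ k := fun e => hkj e.symm
      rw [hoff i k hik x hx, hoff j k hjk x hx]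
      simp only [hD, hh, real_inner_smul_left, real_inner_smul_right]
      simp only [hki, hkj, hik, hjk, if_false]
      ring
  have sumrep : ∀ v : EuclideanSpace ℝ (Fin n),
      ∑ k, v k • EuclideanSpace.single k (1:ℝ) = v := by
    intro v
    have := (EuclideanSpace.basisFun (Fin n) ℝ).sum_repr v
    simpa only [EuclideanSpace.basisFun_apply, EuclideanSpace.basisFun_repr] using this
  have dird : ∀ x ∈ U, ∀ (i j : Fin n) (v : EuclideanSpace ℝ (Fin n)),
      ⟪X i x, fderiv ℝ (X j) x v⟫ + ⟪fderiv ℝ (X i) x v, X j x⟫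
        = ∑ k, v k * D i j k x := by
    intro x hx i j v
    conv_lhs => rw [← sumrep v]
    rw [map_sum, map_sum]
    simp only [map_smul, inner_sum, sum_inner, real_inner_smul_left, real_inner_smul_right]
    rw [← Finset.sum_add_distrib]
    exact Finset.sum_congr rfl fun k _ => by rw [← mul_add, key x hx i j k]
  -- openness of the zero set
  have hopen : ∀ x₁ ∈ U, h x₁ = 0 → ∃ ε > 0, ∀ x ∈ Metric.ball x₁ ε, x ∈ U ∧ h x = 0 := by
    intro x₁ hx₁ hh₁
    obtain ⟨r, hr0, hrU⟩ := Metric.nhds_basis_closedBall.mem_iff.1 (hU.mem_nhds hx₁)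
    obtain ⟨B, hB0, hB⟩ : ∃ B : ℝ, 0 ≤ B ∧
        ∀ (m k : Fin n), ∀ y ∈ Metric.closedBall x₁ r, |β m k y| ≤ B := by
      obtain ⟨C, hC⟩ := (isCompact_closedBall x₁ r).exists_bound_of_continuousOn
        (f := fun y => fun p : Fin n × Fin n => β p.1 p.2 y)
        (continuousOn_pi.2 fun p => ((hβ p.1 p.2).continuousOn).mono hrU)
      refine ⟨max C 0, le_max_right _ _, fun m k y hy => ?_⟩
      have h1 : |β m k y| = ‖(fun p : Fin n × Fin n => β p.1 p.2 y) (m, k)‖ := rfl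
      rw [h1]
      exact (norm_le_pi_norm _ (m, k)).trans ((hC y hy).trans (le_max_left _ _))
    refine ⟨r, hr0, fun x hxb => ?_⟩
    have hxU : x ∈ U := hrU (Metric.ball_subset_closedBall hxb)
    refine ⟨hxU, ?_⟩
    set v : EuclideanSpace ℝ (Fin n) := x - x₁ with hv
    set γ : ℝ → EuclideanSpace ℝ (Fin n) := fun t => x₁ + t • v with hγ
    have hγ0 : γ 0 = x₁ := by simp [hγ]
    have hγ1 : γ 1 = x := by simp [hγ, hv]
    have hγmem : ∀ t ∈ Set.Icc (0:ℝ) 1, γ t ∈ Metric.closedBall x₁ r := by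
      intro t ht
      have : dist (γ t) x₁ = |t| * ‖v‖ := by
        rw [hγ]; simp [dist_eq_norm, norm_smul]
      rw [Metric.mem_closedBall, this]
      have h1 : |t| ≤ 1 := by
        rw [abs_le]; exact ⟨le_trans (by norm_num) ht.1, ht.2⟩
      have h2 : ‖v‖ ≤ r := by
        have := Metric.mem_ball.1 hxb
        rw [dist_eq_norm] at this
        exact le_of_lt (by simpa [hv] using this)
      calc |t| * ‖v‖ ≤ 1 * ‖v‖ := by
            exact mul_le_mul_of_nonneg_right h1 (norm_nonneg _)
        _ = ‖v‖ := one_mul _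
        _ ≤ r := h2
    have hγU : ∀ t ∈ Set.Icc (0:ℝ) 1, γ t ∈ U := fun t ht => hrU (hγmem t ht)
    set φ : ℝ → (Fin n → Fin n → ℝ) := fun t => h (γ t) with hφ
    set φ' : ℝ → (Fin n → Fin n → ℝ) := fun t i j => ∑ k, v k * D i j k (γ t) with hφ'
    have hder : ∀ t ∈ Set.Icc (0:ℝ) 1, HasDerivAt φ (φ' t) t := by
      intro t ht
      rw [hasDerivAt_pi]; intro i; rw [hasDerivAt_pi]; intro j
      have hγd : HasDerivAt γ v t := by
        simpa [hγ] using ((hasDerivAt_id t).smul_const v).const_add x₁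
      have hXi : HasDerivAt (fun s => X i (γ s)) (fderiv ℝ (X i) (γ t) v) t :=
        (hXd i _ (hγU t ht)).hasFDerivAt.comp_hasDerivAt t hγd
      have hXj : HasDerivAt (fun s => X j (γ s)) (fderiv ℝ (X j) (γ t) v) t :=
        (hXd j _ (hγU t ht)).hasFDerivAt.comp_hasDerivAt t hγd
      have hin := (hXi.inner ℝ hXj).sub_const (if i = j then (1:ℝ) else 0)
      rw [dird (γ t) (hγU t ht) i j v] at hin
      exact hin
    -- bound on the derivative
    have hentry : ∀ t, ∀ a b : Fin n, |h (γ t) a b| ≤ ‖φ t‖ := by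
      intro t a b
      have he : φ t a b = h (γ t) a b := by rw [hφ]
      calc |h (γ t) a b| = ‖φ t a b‖ := by rw [Real.norm_eq_abs, he]
        _ ≤ ‖φ t a‖ := norm_le_pi_norm (φ t a) b
        _ ≤ ‖φ t‖ := norm_le_pi_norm (φ t) a
    have hcard : ∀ a : Fin n, ((Finset.univ.erase a).card : ℝ) ≤ (n : ℝ) := by
      intro a
      have h1 : (Finset.univ.erase a).card ≤ (Finset.univ : Finset (Fin n)).card :=
        Finset.card_erase_le
      have h2 : (Finset.univ : Finset (Fin n)).card = n := by simp
      exact_mod_cast h2 ▸ h1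
    have hsumb1 : ∀ t ∈ Set.Icc (0:ℝ) 1, ∀ a b : Fin n,
        |∑ m ∈ Finset.univ.erase a, β m a (γ t) * h (γ t) m b| ≤ (n:ℝ) * B * ‖φ t‖ := by
      intro t ht a b
      calc |∑ m ∈ Finset.univ.erase a, β m a (γ t) * h (γ t) m b|
          ≤ ∑ m ∈ Finset.univ.erase a, |β m a (γ t) * h (γ t) m b| :=
            Finset.abs_sum_le_sum_abs _ _
        _ ≤ ∑ _m ∈ Finset.univ.erase a, B * ‖φ t‖ := by
            refine Finset.sum_le_sum fun m _ => ?_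
            rw [abs_mul]
            exact mul_le_mul (hB m a _ (hγmem t ht)) (hentry t m b) (abs_nonneg _) hB0
        _ = ((Finset.univ.erase a).card : ℝ) * (B * ‖φ t‖) := by
            rw [Finset.sum_const, nsmul_eq_mul]
        _ ≤ (n:ℝ) * (B * ‖φ t‖) :=
            mul_le_mul_of_nonneg_right (hcard a) (mul_nonneg hB0 (norm_nonneg _))
        _ = (n:ℝ) * B * ‖φ t‖ := by ring
    have hsumb2 : ∀ t ∈ Set.Icc (0:ℝ) 1, ∀ a b : Fin n,
        |∑ m ∈ Finset.univ.erase a, β m a (γ t) * h (γ t) b m| ≤ (n:ℝ) * B * ‖φ t‖ := by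
      intro t ht a b
      calc |∑ m ∈ Finset.univ.erase a, β m a (γ t) * h (γ t) b m|
          ≤ ∑ m ∈ Finset.univ.erase a, |β m a (γ t) * h (γ t) b m| :=
            Finset.abs_sum_le_sum_abs _ _
        _ ≤ ∑ _m ∈ Finset.univ.erase a, B * ‖φ t‖ := by
            refine Finset.sum_le_sum fun m _ => ?_
            rw [abs_mul]
            exact mul_le_mul (hB m a _ (hγmem t ht)) (hentry t b m) (abs_nonneg _) hB0
        _ = ((Finset.univ.erase a).card : ℝ) * (B * ‖φ t‖) := by
            rw [Finset.sum_const, nsmul_eq_mul]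
        _ ≤ (n:ℝ) * (B * ‖φ t‖) :=
            mul_le_mul_of_nonneg_right (hcard a) (mul_nonneg hB0 (norm_nonneg _))
        _ = (n:ℝ) * B * ‖φ t‖ := by ring
    have hDb : ∀ t ∈ Set.Icc (0:ℝ) 1, ∀ i j k : Fin n,
        |D i j k (γ t)| ≤ 2 * ((n:ℝ) * B) * ‖φ t‖ := by
      intro t ht i j k
      have h1n : (1:ℝ) ≤ (n:ℝ) := by exact_mod_cast k.pos
      have hφn : (0:ℝ) ≤ ‖φ t‖ := norm_nonneg _
      have hsingle : ∀ a b c d : Fin n, |β a b (γ t) * h (γ t) c d| ≤ (n:ℝ) * B * ‖φ t‖ := by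
        intro a b c d
        rw [abs_mul]
        calc |β a b (γ t)| * |h (γ t) c d| ≤ B * ‖φ t‖ :=
              mul_le_mul (hB a b _ (hγmem t ht)) (hentry t c d) (abs_nonneg _) hB0
          _ = 1 * (B * ‖φ t‖) := by ring
          _ ≤ (n:ℝ) * (B * ‖φ t‖) :=
              mul_le_mul_of_nonneg_right h1n (mul_nonneg hB0 hφn)
          _ = (n:ℝ) * B * ‖φ t‖ := by ring
      have hT1 : |if k = i then -∑ m ∈ Finset.univ.erase i, β m i (γ t) * h (γ t) m j
          else β i k (γ t) * h (γ t) k j| ≤ (n:ℝ) * B * ‖φ t‖ := by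
        split_ifs with hc
        · rw [abs_neg]; exact hsumb1 t ht i j
        · exact hsingle i k k j
      have hT2 : |if k = j then -∑ m ∈ Finset.univ.erase j, β m j (γ t) * h (γ t) i m
          else β j k (γ t) * h (γ t) i k| ≤ (n:ℝ) * B * ‖φ t‖ := by
        split_ifs with hc
        · rw [abs_neg]; exact hsumb2 t ht j i
        · exact hsingle j k i k
      calc |D i j k (γ t)| ≤ (n:ℝ) * B * ‖φ t‖ + (n:ℝ) * B * ‖φ t‖ := by
            rw [hD]
            exact (abs_add_le _ _).trans (add_le_add hT1 hT2)
        _ = 2 * ((n:ℝ) * B) * ‖φ t‖ := by ring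
    set K : ℝ := (∑ k, |v k|) * (2 * ((n:ℝ) * B)) with hK
    have hKn : 0 ≤ K := by
      apply mul_nonneg (Finset.sum_nonneg fun _ _ => abs_nonneg _)
      positivity
    have hbound : ∀ t ∈ Set.Ico (0:ℝ) 1, ‖φ' t‖ ≤ K * ‖φ t‖ + 0 := by
      intro t ht
      rw [add_zero]
      have ht' : t ∈ Set.Icc (0:ℝ) 1 := ⟨ht.1, le_of_lt ht.2⟩
      have hKφ : 0 ≤ K * ‖φ t‖ := mul_nonneg hKn (norm_nonneg _)
      refine (pi_norm_le_iff_of_nonneg hKφ).2 fun i => ?_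
      refine (pi_norm_le_iff_of_nonneg hKφ).2 fun j => ?_
      have he : φ' t i j = ∑ k, v k * D i j k (γ t) := by rw [hφ']
      rw [Real.norm_eq_abs, he]
      calc |∑ k, v k * D i j k (γ t)| ≤ ∑ k, |v k * D i j k (γ t)| :=
            Finset.abs_sum_le_sum_abs _ _
        _ ≤ ∑ k, |v k| * (2 * ((n:ℝ) * B) * ‖φ t‖) := by
            refine Finset.sum_le_sum fun k _ => ?_
            rw [abs_mul]
            exact mul_le_mul_of_nonneg_left (hDb t ht' i j k) (abs_nonneg _)
        _ = K * ‖φ t‖ := by rw [hK, ← Finset.sum_mul]; ring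
    have hcφ : ContinuousOn φ (Set.Icc 0 1) := fun t ht =>
      ((hder t ht).continuousAt).continuousWithinAt
    have h0 : ‖φ 0‖ ≤ 0 := by
      have hz : φ 0 = 0 := by rw [hφ]; simp only [hγ0]; exact hh₁
      simp [hz]
    have hG := norm_le_gronwallBound_of_norm_deriv_right_le hcφ
      (fun t ht => (hder t (Set.Ico_subset_Icc_self ht)).hasDerivWithinAt) h0 hbound
    have h1 : ‖φ 1‖ ≤ 0 := by
      have := hG 1 (by constructor <;> norm_num)
      rwa [gronwallBound_ε0_δ0] at this
    have hz1 : φ 1 = 0 := norm_le_zero_iff.1 h1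
    rw [hφ] at hz1
    simp only [hγ1] at hz1
    exact hz1
  -- continuity of h on U
  have hcont : ContinuousOn h U := by
    refine continuousOn_pi.2 fun i => continuousOn_pi.2 fun j => ?_
    exact (((hX i).continuousOn).inner ((hX j).continuousOn)).sub continuousOn_const
  set V : Set (EuclideanSpace ℝ (Fin n)) := {x | x ∈ U ∧ h x = 0} with hV
  set W : Set (EuclideanSpace ℝ (Fin n)) := {x | x ∈ U ∧ h x ≠ 0} with hW
  have hVopen : IsOpen V := by
    rw [Metric.isOpen_iff]
    rintro x ⟨hxU, hx0⟩
    obtain ⟨ε, hε, hball⟩ := hopen x hxU hx0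
    exact ⟨ε, hε, fun y hy => hball y hy⟩
  have hWopen : IsOpen W := by
    have : W = U ∩ h ⁻¹' ({0}ᶜ) := by
      ext y; simp [hW, Set.mem_inter_iff, and_comm]
    rw [this]
    exact hcont.isOpen_inter_preimage hU isOpen_compl_singleton
  have hdisj : Disjoint V W := by
    rw [Set.disjoint_left]
    rintro x ⟨_, hx0⟩ ⟨_, hx0'⟩
    exact hx0' hx0
  have hsub : U ⊆ V ∪ W := fun x hx => by
    by_cases hx0 : h x = 0
    · exact Or.inl ⟨hx, hx0⟩
    · exact Or.inr ⟨hx, hx0⟩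
  have hx₀0 : h x₀ = 0 := by
    funext i j
    simp only [hh, Pi.zero_apply]
    rw [horth i j, sub_self]
  rcases hUconn.isPreconnected.subset_or_subset hVopen hWopen hdisj hsub with hVs | hWs
  · exact fun x hx => (hVs hx).2
  · exact absurd hx₀0 (hWs hx₀).2
end

section
/- Let f : M^n → ℝ^N be an isometric immersion of a simply connected Riemannian manifold, V a Euclidean vector space, and Φ ∈ Γ(T*M ⊗ V* ⊗ TM). Then there exists F ∈ Γ(V* ⊗ f*Tℝ^N) with dF(X)(v) = f_* Φ_v X for all X, v if and only if Φ is closed as a (V* ⊗ TM)-valued one-form and α(X, Φ_v Y) = α(Y, Φ_v X) for all vector fields X, Y and v ∈ V, where α is the second fundamental form of f. -/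
set_option maxHeartbeats 1000000
set_option synthInstance.maxHeartbeats 400000

open MeasureTheory Set
open scoped ENNReal NNReal

section Aux

variable {E W : Type*} [NormedAddCommGroup E] [NormedSpace ℝ E]
  [NormedAddCommGroup W] [NormedSpace ℝ W] [CompleteSpace W]


omit [CompleteSpace W] in
lemma fderiv_clm_apply_const {F' : Type*} [NormedAddCommGroup F'] [NormedSpace ℝ F']
    {g : E → F' →L[ℝ] W} {x : E}
    (hg : DifferentiableAt ℝ g x) (X : E) (Y : F') :
    fderiv ℝ (fun y => g y Y) x X = fderiv ℝ g x X Y := by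
  have h := (hg.hasFDerivAt.clm_apply (hasFDerivAt_const Y x)).fderiv
  rw [h]
  simp

lemma exists_antideriv [FiniteDimensional ℝ E]
    (ω : E → E →L[ℝ] W) (hω : ContDiff ℝ (⊤ : ℕ∞) ω)
    (hsymm : ∀ x X Y, fderiv ℝ ω x X Y = fderiv ℝ ω x Y X) :
    ∃ F : E → W, ContDiff ℝ (⊤ : ℕ∞) F ∧ ∀ x, fderiv ℝ F x = ω x := by
  have hdiff : Differentiable ℝ ω := hω.differentiable (by simp)
  have hcont : Continuous ω := hω.continuous
  have hfd : ContDiff ℝ (⊤ : ℕ∞) (fderiv ℝ ω) := hω.fderiv_right (by simp)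
  have hDcont : Continuous (fderiv ℝ ω) := hfd.continuous
  set F' : E → ℝ → (E →L[ℝ] W) := fun x t =>
    ω (t • x) + t • ((ContinuousLinearMap.apply ℝ W x).comp (fderiv ℝ ω (t • x))) with hF'
  set F : E → W := fun x => ∫ t in (0 : ℝ)..1, ω (t • x) x with hFdef
  -- joint continuity of F'
  have h1 : Continuous fun p : E × ℝ => ω (p.2 • p.1) :=
    hcont.comp (continuous_snd.smul continuous_fst)
  have h2 : Continuous fun p : E × ℝ => fderiv ℝ ω (p.2 • p.1) :=
    hDcont.comp (continuous_snd.smul continuous_fst)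
  have h3 : Continuous fun p : E × ℝ => ContinuousLinearMap.apply ℝ W p.1 :=
    (ContinuousLinearMap.apply ℝ W).continuous.comp continuous_fst
  have hF'c : Continuous fun p : E × ℝ => F' p.1 p.2 :=
    h1.add (continuous_snd.smul (h3.clm_comp h2))
  -- pointwise differentiability in x
  have hdiffx : ∀ (t : ℝ) (x : E), HasFDerivAt (fun y => ω (t • y) y) (F' x t) x := by
    intro t x
    have hin : HasFDerivAt (fun y : E => t • y) (t • ContinuousLinearMap.id ℝ E) x := by
      exact (hasFDerivAt_id x).const_smul t
    have hc : HasFDerivAt (fun y => ω (t • y))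
        ((fderiv ℝ ω (t • x)).comp (t • ContinuousLinearMap.id ℝ E)) x :=
      (hdiff (t • x)).hasFDerivAt.comp x hin
    have happ := hc.clm_apply (hasFDerivAt_id x)
    convert happ using 1
    · rfl
    ext X
    simp [hF', ContinuousLinearMap.map_smul]
  -- derivative of t ↦ t • ω (t • x₀)
  have hg : ∀ (x₀ : E) (t : ℝ),
      HasDerivAt (fun s : ℝ => s • ω (s • x₀)) (F' x₀ t) t := by
    intro x₀ t
    have h1' : HasDerivAt (fun s : ℝ => s • x₀) x₀ t := by
      simpa using (hasDerivAt_id t).smul_const x₀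
    have h2' : HasDerivAt (fun s : ℝ => ω (s • x₀)) (fderiv ℝ ω (t • x₀) x₀) t := by
      simpa [Function.comp_def] using (hdiff (t • x₀)).hasFDerivAt.comp_hasDerivAt t h1'
    have h3' := (hasDerivAt_id t).smul h2'
    refine h3'.congr_deriv (Eq.symm ?_)
    ext X
    simp [hF']
    rw [hsymm (t • x₀) X x₀, add_comm]
  have keyD : ∀ x₀ : E, HasFDerivAt F (ω x₀) x₀ := by
    intro x₀
    obtain ⟨C, hC⟩ := (((isCompact_closedBall x₀ 1).prod (isCompact_Icc (a := (0:ℝ))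
      (b := 1)))).exists_bound_of_continuousOn hF'c.continuousOn
    have hF'x₀cont : Continuous (F' x₀) := hF'c.comp (Continuous.prodMk_right x₀)
    have hval : (∫ t in (0 : ℝ)..1, F' x₀ t) = ω x₀ := by
      rw [intervalIntegral.integral_eq_sub_of_hasDerivAt (fun t _ => hg x₀ t)
        (hF'x₀cont.intervalIntegrable 0 1)]
      simp
    have hmain := intervalIntegral.hasFDerivAt_integral_of_dominated_of_fderiv_le
      (F := fun x t => ω (t • x) x) (F' := fun x t => F' x t) (x₀ := x₀)
      (a := 0) (b := 1) (bound := fun _ => C) (μ := MeasureTheory.volume)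
      (Metric.ball_mem_nhds x₀ one_pos)
      (Filter.Eventually.of_forall fun x =>
        (((hcont.comp (continuous_id.smul continuous_const)).clm_apply
          continuous_const : Continuous fun t : ℝ => ω (t • x) x)).aestronglyMeasurable)
      (((hcont.comp (continuous_id.smul continuous_const)).clm_apply
          continuous_const : Continuous fun t : ℝ => ω (t • x₀) x₀).intervalIntegrable 0 1)
      hF'x₀cont.aestronglyMeasurable
      (Filter.Eventually.of_forall fun t => fun ht x hx => by
        have h01 : t ∈ Icc (0:ℝ) 1 := by
          rw [uIoc_of_le zero_le_one] at ht
          exact Ioc_subset_Icc_self ht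
        exact hC (x, t) ⟨Metric.ball_subset_closedBall hx, h01⟩)
      (intervalIntegrable_const)
      (Filter.Eventually.of_forall fun t => fun _ x _ => hdiffx t x)
    rwa [hval] at hmain
  have hfderiv : ∀ x, fderiv ℝ F x = ω x := fun x => (keyD x).fderiv
  have hFa : ContDiff ℝ (⊤ : ℕ∞) F :=
    contDiff_infty_iff_fderiv.mpr ⟨fun x => (keyD x).differentiableAt,
      by rw [show fderiv ℝ F = ω from funext hfderiv]; exact hω⟩
  exact ⟨F, hFa, hfderiv⟩

end Aux

open RealInnerProductSpace

/-- Orthogonal projection of the ambient space onto the tangent space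
`f_*(T_x M) = range (df_x)` of an immersion `f` at `x`. -/
noncomputable def tangProj {n N : ℕ}
    (f : EuclideanSpace ℝ (Fin n) → EuclideanSpace ℝ (Fin N))
    (x : EuclideanSpace ℝ (Fin n)) :
    EuclideanSpace ℝ (Fin N) →L[ℝ] EuclideanSpace ℝ (Fin N) :=
  (Submodule.subtypeL _).comp (Submodule.orthogonalProjectionOnto (LinearMap.range
    (fderiv ℝ f x : EuclideanSpace ℝ (Fin n) →ₗ[ℝ] EuclideanSpace ℝ (Fin N))))

/-- STATEMENT 17 (Proposition 6, the vectorial Combescure transform), in a chart: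
for an isometric immersion `f : Mⁿ → ℝᴺ` of a simply connected Riemannian manifold
(ℝⁿ with the metric induced by the immersion `f`), a Euclidean vector space `V` and
`Φ ∈ Γ(T*M ⊗ V* ⊗ TM)`, there exists `𝓕 ∈ Γ(V* ⊗ f*Tℝᴺ)` with
`d𝓕(X)(v) = f_* Φ_v X` if and only if `Φ` is closed (its Levi-Civita covariant
derivative, computed ambiently as the tangential part of `D_X(f_*(Φ_v Y))`, is
symmetric in `X, Y`) and `α(X, Φ_v Y) = α(Y, Φ_v X)` (the normal parts of
`D_X(f_*(Φ_v Y))` are symmetric in `X, Y`), `α` being the second fundamental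
form of `f`. -/
theorem combescure_existence_iff {n N : ℕ}
    {V : Type*} [NormedAddCommGroup V] [InnerProductSpace ℝ V] [FiniteDimensional ℝ V]
    (f : EuclideanSpace ℝ (Fin n) → EuclideanSpace ℝ (Fin N))
    (hf : ContDiff ℝ (⊤ : ℕ∞) f)
    (himm : ∀ x, Function.Injective (fderiv ℝ f x))
    (Φ : EuclideanSpace ℝ (Fin n) →
      EuclideanSpace ℝ (Fin n) →L[ℝ] V →L[ℝ] EuclideanSpace ℝ (Fin n))
    (hΦ : ContDiff ℝ (⊤ : ℕ∞) Φ) :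
    (∃ F : EuclideanSpace ℝ (Fin n) → V →L[ℝ] EuclideanSpace ℝ (Fin N),
        ContDiff ℝ (⊤ : ℕ∞) F ∧ ∀ x X v, fderiv ℝ F x X v = fderiv ℝ f x (Φ x X v)) ↔
      ((∀ x X Y v,
          tangProj f x (fderiv ℝ (fun y => fderiv ℝ f y (Φ y Y v)) x X) =
            tangProj f x (fderiv ℝ (fun y => fderiv ℝ f y (Φ y X v)) x Y)) ∧
        (∀ x X Y v,
          fderiv ℝ (fun y => fderiv ℝ f y (Φ y Y v)) x X -
              tangProj f x (fderiv ℝ (fun y => fderiv ℝ f y (Φ y Y v)) x X) =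
            fderiv ℝ (fun y => fderiv ℝ f y (Φ y X v)) x Y -
              tangProj f x (fderiv ℝ (fun y => fderiv ℝ f y (Φ y X v)) x Y))) := by

  classical
  set ω : EuclideanSpace ℝ (Fin n) →
      EuclideanSpace ℝ (Fin n) →L[ℝ] (V →L[ℝ] EuclideanSpace ℝ (Fin N)) := fun x =>
    ((ContinuousLinearMap.compL ℝ V (EuclideanSpace ℝ (Fin n)) (EuclideanSpace ℝ (Fin N)))
      (fderiv ℝ f x)).comp (Φ x) with hω
  have hωapp : ∀ y Y v, ω y Y v = fderiv ℝ f y (Φ y Y v) := fun y Y v => rfl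
  have h1s : ContDiff ℝ (⊤ : ℕ∞) (fun x =>
      (ContinuousLinearMap.compL ℝ V (EuclideanSpace ℝ (Fin n)) (EuclideanSpace ℝ (Fin N)))
        (fderiv ℝ f x)) :=
    (ContinuousLinearMap.contDiff _).comp (hf.fderiv_right (by simp))
  have hωsmooth : ContDiff ℝ (⊤ : ℕ∞) ω := h1s.clm_comp hΦ
  have hωdiff : Differentiable ℝ ω := hωsmooth.differentiable (by simp)
  -- the derivative-swap identity for ω
  have hswap : ∀ x X Y v, fderiv ℝ (fun y => ω y Y v) x X = fderiv ℝ ω x X Y v := by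
    intro x X Y v
    have hd1 : DifferentiableAt ℝ (fun y => ω y Y) x :=
      (hωdiff x).clm_apply (differentiableAt_const Y)
    have h1 : fderiv ℝ (fun y => ω y Y v) x X = fderiv ℝ (fun y => ω y Y) x X v :=
      fderiv_clm_apply_const hd1 X v
    have h2 : fderiv ℝ (fun y => ω y Y) x X = fderiv ℝ ω x X Y :=
      fderiv_clm_apply_const (hωdiff x) X Y
    rw [h1, h2]
  have hfun : ∀ (Y : EuclideanSpace ℝ (Fin n)) (v : V),
      (fun y => fderiv ℝ f y (Φ y Y v)) = fun y => ω y Y v := by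
    intro Y v; funext y; exact (hωapp y Y v).symm
  constructor
  · rintro ⟨F, hF, hdF⟩
    -- full symmetry of the second derivative
    have hfull : ∀ x X Y v,
        fderiv ℝ (fun y => fderiv ℝ f y (Φ y Y v)) x X =
          fderiv ℝ (fun y => fderiv ℝ f y (Φ y X v)) x Y := by
      intro x X Y v
      have hFd : Differentiable ℝ (fderiv ℝ F) :=
        (hF.fderiv_right (m := (⊤ : ℕ∞)) (by simp)).differentiable (by simp)
      have key : ∀ X' Y' : EuclideanSpace ℝ (Fin n),
          fderiv ℝ (fun y => fderiv ℝ f y (Φ y Y' v)) x X' =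
            fderiv ℝ (fderiv ℝ F) x X' Y' v := by
        intro X' Y'
        have heq : (fun y => fderiv ℝ f y (Φ y Y' v)) = fun y => fderiv ℝ F y Y' v := by
          funext y; exact (hdF y Y' v).symm
        rw [heq]
        have hd1 : DifferentiableAt ℝ (fun y => fderiv ℝ F y Y') x :=
          (hFd x).clm_apply (differentiableAt_const Y')
        have h1 : fderiv ℝ (fun y => fderiv ℝ F y Y' v) x X'
            = fderiv ℝ (fun y => fderiv ℝ F y Y') x X' v :=
          fderiv_clm_apply_const hd1 X' v
        have h2 : fderiv ℝ (fun y => fderiv ℝ F y Y') x X'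
            = fderiv ℝ (fderiv ℝ F) x X' Y' :=
          fderiv_clm_apply_const (hFd x) X' Y'
        rw [h1, h2]
      have hsymm2 : fderiv ℝ (fderiv ℝ F) x X Y = fderiv ℝ (fderiv ℝ F) x Y X :=
        (hF.contDiffAt.isSymmSndFDerivAt (by rw [minSmoothness_of_isRCLikeNormedField]; exact WithTop.coe_le_coe.mpr le_top)) X Y
      rw [key X Y, key Y X, hsymm2]
    refine ⟨fun x X Y v => by rw [hfull x X Y v], fun x X Y v => by rw [hfull x X Y v]⟩
  · rintro ⟨c1, c2⟩
    -- recover the full symmetry from the tangential and normal parts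
    have hfull : ∀ x X Y v,
        fderiv ℝ (fun y => fderiv ℝ f y (Φ y Y v)) x X =
          fderiv ℝ (fun y => fderiv ℝ f y (Φ y X v)) x Y := by
      intro x X Y v
      have hA := c2 x X Y v
      have hB := c1 x X Y v
      set A := fderiv ℝ (fun y => fderiv ℝ f y (Φ y Y v)) x X with hAdef
      set B := fderiv ℝ (fun y => fderiv ℝ f y (Φ y X v)) x Y with hBdef
      calc A = A - tangProj f x A + tangProj f x A := (sub_add_cancel A _).symm
        _ = B - tangProj f x B + tangProj f x B := by rw [hA, hB]
        _ = B := sub_add_cancel B _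
    have hsymm : ∀ x X Y, fderiv ℝ ω x X Y = fderiv ℝ ω x Y X := by
      intro x X Y
      ext v
      have h1 := hswap x X Y v
      have h2 := hswap x Y X v
      rw [← h1, ← h2, ← hfun, ← hfun, hfull x X Y v]
    obtain ⟨F, hFsmooth, hFderiv⟩ := exists_antideriv ω hωsmooth hsymm
    refine ⟨F, hFsmooth, fun x X v => ?_⟩
    rw [hFderiv x]
    exact hωapp x X v
end
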